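/- In an intersecting (2,m)-system covering V (with ℓ ≥ 3), if w(p_ℓ) = 0, then |V_0(G)| + w(G) ≤ |V_0(G′)| + w(G′), where G′ = G − p_ℓ is the graph with edge set {p_1,…,p_{ℓ−1}}. -/

import Mathlib

/-!
Write `B` for the vertices of `G′` and `k = |p_ℓ ∖ B|`, so that `|V₀(G)| = |V₀(G′)| + k`.
Since `w(p_ℓ) = 0`, it suffices that `∑_{i<ℓ} (τ(G∖p_i) − τ(G′∖p_i)) ≥ k`. Every term is
nonnegative, and it is positive as soon as `p_ℓ ∖ p_i` avoids `B`: a minimum transversal of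
`G∖p_i` must then use a vertex that only `p_ℓ` needs, and dropping it leaves a transversal of
`G′∖p_i`. If `k = 2` this happens for all `ℓ − 1 ≥ 2` indices `i`; if `k = 1` it happens for an
edge `p_i` through the vertex of `p_ℓ` lying in `B`.
-/

open Finset

/-- The minimum cardinality of a set `S ⊆ A` meeting every member `q i`, `i ∈ s`,
of a set system (a transversal number). -/
noncomputable def transversalNum {α ι : Type*} [DecidableEq α]
    (A : Finset α) (s : Finset ι) (q : ι → Finset α) : ℕ :=
  sInf {n : ℕ | ∃ S : Finset α, S ⊆ A ∧ S.card = n ∧ ∀ i ∈ s, (S ∩ q i).Nonempty}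

section Transversal

variable {α ι : Type*} [DecidableEq α] {A S : Finset α} {s t : Finset ι} {q : ι → Finset α}

theorem transversalNum_le_card (hSA : S ⊆ A) (hS : ∀ i ∈ s, (S ∩ q i).Nonempty) :
    transversalNum A s q ≤ S.card :=
  Nat.sInf_le ⟨S, hSA, rfl, hS⟩

theorem exists_card_eq_transversalNum (hA : ∀ i ∈ s, (A ∩ q i).Nonempty) :
    ∃ S ⊆ A, S.card = transversalNum A s q ∧ ∀ i ∈ s, (S ∩ q i).Nonempty := by
  obtain ⟨S, hSA, hcard, hS⟩ := Nat.sInf_mem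
    (s := {n | ∃ S : Finset α, S ⊆ A ∧ S.card = n ∧ ∀ i ∈ s, (S ∩ q i).Nonempty})
    ⟨A.card, A, subset_rfl, rfl, hA⟩
  exact ⟨S, hSA, hcard, hS⟩

theorem transversalNum_mono (hst : s ⊆ t) (hA : ∀ i ∈ t, (A ∩ q i).Nonempty) :
    transversalNum A s q ≤ transversalNum A t q := by
  obtain ⟨S, hSA, hcard, hS⟩ := exists_card_eq_transversalNum hA
  exact hcard ▸ transversalNum_le_card hSA fun i hi => hS i (hst hi)

theorem transversalNum_add_one_le (hst : s ⊆ t) (hA : ∀ i ∈ t, (A ∩ q i).Nonempty) {e : ι}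
    (he : e ∈ t) (hdisj : ∀ i ∈ s, Disjoint (q e) (q i)) :
    transversalNum A s q + 1 ≤ transversalNum A t q := by
  obtain ⟨S, hSA, hcard, hS⟩ := exists_card_eq_transversalNum hA
  obtain ⟨w, hw⟩ := hS e he
  rw [mem_inter] at hw
  have hle : transversalNum A s q ≤ (S.erase w).card := by
    refine transversalNum_le_card ((erase_subset _ _).trans hSA) fun i hi => ?_
    obtain ⟨x, hx⟩ := hS i (hst hi)
    rw [mem_inter] at hx
    refine ⟨x, mem_inter.2 ⟨mem_erase.2 ⟨?_, hx.1⟩, hx.2⟩⟩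
    rintro rfl
    exact disjoint_left.1 (hdisj i hi) hw.2 hx.2
  rw [card_erase_of_mem hw.1] at hle
  have := card_pos.2 ⟨w, hw.1⟩
  omega

end Transversal

theorem Finset.disjoint_sdiff_of_card_eq_two {α : Type*} [DecidableEq α] {P Q B : Finset α}
    (hP : P.card = 2) {u v : α} (huP : u ∈ P) (huQ : u ∈ Q) (huB : u ∈ B) (hvP : v ∈ P)
    (hvB : v ∉ B) : Disjoint (P \ Q) B := by
  obtain ⟨a, b, hab, rfl⟩ := card_eq_two.1 hP
  rw [disjoint_left]
  intro x hx hxB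
  simp only [mem_sdiff, mem_insert, mem_singleton] at hx huP hvP
  grind

section Graph

variable {α ι : Type*} [DecidableEq α] [DecidableEq ι] (p : ι → Finset α)

theorem card_biUnion_eq_card_biUnion_erase_add {s : Finset ι} {e : ι} (he : e ∈ s) :
    (s.biUnion p).card = ((s.erase e).biUnion p).card + (p e \ (s.erase e).biUnion p).card := by
  conv_lhs => rw [← insert_erase he]
  rw [biUnion_insert, ← card_sdiff_add_card, add_comm]

theorem card_sdiff_biUnion_erase_le_card_filter {s : Finset ι} {e : ι} (he : e ∈ s)
    (hpe : (p e).card = 2) (hs : 3 ≤ s.card) :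
    (p e \ (s.erase e).biUnion p).card ≤
      ((s.erase e).filter fun i => Disjoint (p e \ p i) ((s.erase e).biUnion p)).card := by
  set B := (s.erase e).biUnion p
  by_cases hdisj : Disjoint (p e) B
  · rw [filter_true_of_mem fun i _ => disjoint_of_subset_left sdiff_subset hdisj,
      card_erase_of_mem he]
    have := card_le_card (sdiff_subset (s := p e) (t := B))
    omega
  · obtain ⟨u, huP, huB⟩ := not_disjoint_iff.1 hdisj
    obtain ⟨i₀, hi₀, hui₀⟩ := mem_biUnion.1 huB
    have hlt : (p e \ B).card < (p e).card :=
      card_lt_card ⟨sdiff_subset, fun h => (mem_sdiff.1 (h huP)).2 huB⟩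
    obtain hempty | ⟨v, hv⟩ := (p e \ B).eq_empty_or_nonempty
    · simp [hempty]
    · rw [mem_sdiff] at hv
      have hi₀mem : i₀ ∈ (s.erase e).filter fun i => Disjoint (p e \ p i) B :=
        mem_filter.2 ⟨hi₀, disjoint_sdiff_of_card_eq_two hpe huP hui₀ huB hv.1 hv.2⟩
      have := card_pos.2 ⟨i₀, hi₀mem⟩
      omega

variable [Fintype α]

/-- `τ(G∖p_i)` for the graph `G` with edge set `{p h | h ∈ s}`. -/
noncomputable def truncatedTransversalNum (s : Finset ι) (i : ι) : ℕ :=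
  transversalNum (univ \ p i) (s.erase i) (fun h => p h \ p i)

noncomputable def edgeWeight (m : ℕ) (s : Finset ι) (i : ι) : ℤ :=
  m - truncatedTransversalNum p s i

variable {p} {s : Finset ι} {e i : ι}

theorem inter_sdiff_nonempty_of_sdiff_nonempty
    (hsep : ∀ h ∈ s, h ≠ i → (p h \ p i).Nonempty) :
    ∀ h ∈ s.erase i, ((univ \ p i) ∩ (p h \ p i)).Nonempty := by
  intro h hh
  rw [inter_eq_right.2 (sdiff_subset_sdiff (subset_univ _) le_rfl)]
  exact hsep h (mem_of_mem_erase hh) (ne_of_mem_erase hh)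

theorem truncatedTransversalNum_erase_le (hsep : ∀ h ∈ s, h ≠ i → (p h \ p i).Nonempty) :
    truncatedTransversalNum p (s.erase e) i ≤ truncatedTransversalNum p s i :=
  transversalNum_mono (erase_subset_erase _ (erase_subset _ _))
    (inter_sdiff_nonempty_of_sdiff_nonempty hsep)

theorem truncatedTransversalNum_erase_add_one_le
    (hsep : ∀ h ∈ s, h ≠ i → (p h \ p i).Nonempty) (he : e ∈ s) (hei : e ≠ i)
    (hdisj : Disjoint (p e \ p i) ((s.erase e).biUnion p)) :
    truncatedTransversalNum p (s.erase e) i + 1 ≤ truncatedTransversalNum p s i := by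
  refine transversalNum_add_one_le (erase_subset_erase _ (erase_subset _ _))
    (inter_sdiff_nonempty_of_sdiff_nonempty hsep) (mem_erase.2 ⟨hei, he⟩) fun h hh => ?_
  refine disjoint_of_subset_right sdiff_subset (disjoint_of_subset_right ?_ hdisj)
  exact subset_biUnion_of_mem p (mem_of_mem_erase hh)

theorem card_filter_le_sum_edgeWeight_sub (m : ℕ)
    (hsep : ∀ i ∈ s, ∀ h ∈ s, h ≠ i → (p h \ p i).Nonempty) (he : e ∈ s) :
    (((s.erase e).filter fun i => Disjoint (p e \ p i) ((s.erase e).biUnion p)).card : ℤ) ≤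
      ∑ i ∈ s.erase e, (edgeWeight p m (s.erase e) i - edgeWeight p m s i) := by
  rw [card_filter, Nat.cast_sum]
  refine sum_le_sum fun i hi => ?_
  have hsepi := hsep i (mem_of_mem_erase hi)
  unfold edgeWeight
  split_ifs with hdisj
  · have := truncatedTransversalNum_erase_add_one_le hsepi he (ne_of_mem_erase hi).symm hdisj
    omega
  · have := truncatedTransversalNum_erase_le (e := e) hsepi
    omega

end Graph

theorem zero_weight_edge_removal_general {α : Type*} [Fintype α] [DecidableEq α]
    (m ℓ : ℕ) (hℓ : 3 ≤ ℓ)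
    (p M : Fin ℓ → Finset α)
    (hp : ∀ i, (p i).card = 2)
    (hpM : ∀ i j, p i ∩ M j = ∅ ↔ i = j)
    (jl : Fin ℓ)
    (hw : (m : ℤ)
        - (transversalNum (Finset.univ \ p jl) (Finset.univ.erase jl) (fun h => p h \ p jl) : ℤ)
      = 0) :
    ((Finset.univ.biUnion p).card : ℤ)
        + ∑ j : Fin ℓ, ((m : ℤ)
            - (transversalNum (Finset.univ \ p j) (Finset.univ.erase j) (fun h => p h \ p j) : ℤ))
      ≤ (((Finset.univ.erase jl).biUnion p).card : ℤ)
          + ∑ i ∈ Finset.univ.erase jl, ((m : ℤ)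
              - (transversalNum (Finset.univ \ p i) ((Finset.univ.erase jl).erase i)
                  (fun h => p h \ p i) : ℤ)) := by
  have hsep : ∀ i ∈ univ, ∀ h ∈ univ, h ≠ i → (p h \ p i).Nonempty := by
    intro i _ h _ hhi
    obtain ⟨x, hx⟩ := nonempty_iff_ne_empty.2 fun h' => hhi ((hpM h i).1 h')
    rw [mem_inter] at hx
    refine ⟨x, mem_sdiff.2 ⟨hx.1, fun hxi => ?_⟩⟩
    exact disjoint_left.1 (disjoint_iff_inter_eq_empty.2 ((hpM i i).2 rfl)) hxi hx.2
  have hV₀ := card_biUnion_eq_card_biUnion_erase_add p (mem_univ jl)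
  have hgain := (Nat.cast_le.2 (card_sdiff_biUnion_erase_le_card_filter p (mem_univ jl) (hp jl)
    (by simpa using hℓ))).trans (card_filter_le_sum_edgeWeight_sub m hsep (mem_univ jl))
  change _ + ∑ j, edgeWeight p m univ j ≤ _ + ∑ i ∈ univ.erase jl, edgeWeight p m (univ.erase jl) i
  rw [← sum_erase_add _ _ (mem_univ jl), show edgeWeight p m univ jl = 0 from hw, hV₀]
  rw [sum_sub_distrib] at hgain
  push_cast
  linarith

/-- zero_weight_edge_removal -/
theorem zero_weight_edge_removal {α : Type*} [Fintype α] [DecidableEq α]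
    (m ℓ : ℕ) (hℓ : 3 ≤ ℓ)
    (p M : Fin ℓ → Finset α)
    (hp : ∀ i, (p i).card = 2)
    (hM : ∀ i, (M i).card = m)
    (hpM : ∀ i j, p i ∩ M j = ∅ ↔ i = j)
    (hcover : Finset.univ.biUnion M = (Finset.univ : Finset α))
    (jl : Fin ℓ) (hjl : (jl : ℕ) = ℓ - 1)
    (hw : (m : ℤ)
        - (transversalNum (Finset.univ \ p jl) (Finset.univ.erase jl) (fun h => p h \ p jl) : ℤ)
      = 0) :
    ((Finset.univ.biUnion p).card : ℤ)
        + ∑ j : Fin ℓ, ((m : ℤ)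
            - (transversalNum (Finset.univ \ p j) (Finset.univ.erase j) (fun h => p h \ p j) : ℤ))
      ≤ (((Finset.univ.erase jl).biUnion p).card : ℤ)
          + ∑ i ∈ Finset.univ.erase jl, ((m : ℤ)
              - (transversalNum (Finset.univ \ p i) ((Finset.univ.erase jl).erase i)
                  (fun h => p h \ p i) : ℤ)) :=
  zero_weight_edge_removal_general m ℓ hℓ p M hp hpM jl hw
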